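/- Let $J$ be an infinite set and $\lambda,\chi\in\mathbb{R}^J$ satisfy the positive energy condition for $W(A_J)$. For real numbers $m<n$, there exists at most one $r\in\mathbb{R}$ such that both $J_m^{<r}=\{j:\lambda_j=m,\ d_j<r\}$ and $J_n^{>r}=\{j:\lambda_j=n,\ d_j>r\}$ are infinite. -/

import Mathlib

/-!
If `r₁ < r₂`, pick `a` with `λ_a = m`, `d_a < r₁` and `b` with `λ_b = n`, `d_b > r₂`. Transposing
them changes the energy by `(m - n)(d_b - d_a) < -(n - m)(r₂ - r₁)`, and the transposition is
disjoint from any given finitely supported permutation once `a` and `b` are chosen outside its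
support, which the infinitude of both sets allows. Iterating drives the energy to `-∞`.
-/

open scoped BigOperators

/-- A permutation of `J` is finitely supported if it fixes all but finitely many elements. -/
def IsFinPerm {J : Type*} (w : Equiv.Perm J) : Prop := {j | w j ≠ j}.Finite

/-- A finitely supported sign function: takes values `±1` and equals `1` outside a finite set. -/
def IsSign {J : Type*} (σ : J → ℝ) : Prop :=
  (∀ j, σ j = 1 ∨ σ j = -1) ∧ {j | σ j ≠ 1}.Finite

/-- A finitely supported sign function whose support has even cardinality. -/
def IsEvenSign {J : Type*} (σ : J → ℝ) : Prop :=
  IsSign σ ∧ ∃ F : Finset J, (∀ j, σ j = -1 ↔ j ∈ F) ∧ Even F.card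

/-- The energy `λ(w⁻¹.χ - χ) = ∑ⱼ λⱼ (d_{w(j)} - dⱼ)` (a finite sum for `w` finitely
supported). -/
noncomputable def energyA {J : Type*} (lam d : J → ℝ) (w : Equiv.Perm J) : ℝ :=
  ∑ᶠ j, lam j * (d (w j) - d j)

/-- The energy `λ(σ w⁻¹.χ - χ) = ∑ⱼ λⱼ (σⱼ d_{w(j)} - dⱼ)`. -/
noncomputable def energyB {J : Type*} (lam d σ : J → ℝ) (w : Equiv.Perm J) : ℝ :=
  ∑ᶠ j, lam j * (σ j * d (w j) - d j)

/-- Positive energy condition for `W(A_J)`. -/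
def PECA {J : Type*} (lam d : J → ℝ) : Prop :=
  ∃ C : ℝ, ∀ w : Equiv.Perm J, IsFinPerm w → C ≤ energyA lam d w

/-- Positive energy condition for `W(B_J)`. -/
def PECB {J : Type*} (lam d : J → ℝ) : Prop :=
  ∃ C : ℝ, ∀ (σ : J → ℝ) (w : Equiv.Perm J), IsSign σ → IsFinPerm w → C ≤ energyB lam d σ w

/-- Positive energy condition for `W(D_J)`. -/
def PECD {J : Type*} (lam d : J → ℝ) : Prop :=
  ∃ C : ℝ, ∀ (σ : J → ℝ) (w : Equiv.Perm J), IsEvenSign σ → IsFinPerm w → C ≤ energyB lam d σ w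

theorem not_bddBelow_of_forall_exists_le_sub {α : Type*} [AddCommGroup α] [LinearOrder α]
    [IsOrderedAddMonoid α] [Archimedean α] {S : Set α} (hS : S.Nonempty) {ε : α} (hε : 0 < ε)
    (hstep : ∀ x ∈ S, ∃ y ∈ S, y ≤ x - ε) : ¬ BddBelow S := by
  obtain ⟨x₀, hx₀⟩ := hS
  have hdescent : ∀ N : ℕ, ∃ y ∈ S, y ≤ x₀ - N • ε := by
    intro N
    induction N with
    | zero => exact ⟨x₀, hx₀, by simp⟩
    | succ N ih =>
      obtain ⟨y, hy, hyN⟩ := ih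
      obtain ⟨z, hz, hzy⟩ := hstep y hy
      exact ⟨z, hz, by rw [succ_nsmul, sub_add_eq_sub_sub]; exact hzy.trans (sub_le_sub_right hyN ε)⟩
  rintro ⟨C, hC⟩
  obtain ⟨N, hN⟩ := Archimedean.arch (x₀ - C) hε
  obtain ⟨y, hy, hyN⟩ := hdescent (N + 1)
  rw [succ_nsmul] at hyN
  have hlt : x₀ - (N • ε + ε) < C :=
    sub_lt_comm.mp (lt_add_of_le_of_pos hN hε)
  exact (hyN.trans_lt hlt).not_ge (hC hy)

section Permutations

variable {J : Type*}

theorem IsFinPerm.one : IsFinPerm (1 : Equiv.Perm J) := by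
  simp [IsFinPerm]

theorem IsFinPerm.mul {v w : Equiv.Perm J} (hv : IsFinPerm v) (hw : IsFinPerm w) :
    IsFinPerm (v * w) :=
  (hv.union hw).subset fun j hj => by
    by_contra h
    simp only [Set.mem_union, Set.mem_ofPred_eq, not_or, not_not] at h
    exact hj (by rw [Equiv.Perm.mul_apply, h.2, h.1])

theorem isFinPerm_swap [DecidableEq J] (a b : J) : IsFinPerm (Equiv.swap a b) :=
  (Set.toFinite {a, b}).subset fun _ hj => (Equiv.swap_apply_ne_self_iff.mp hj).2

theorem Equiv.Perm.disjoint_swap_of_apply_eq [DecidableEq J] {w : Equiv.Perm J} {a b : J}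
    (ha : w a = a) (hb : w b = b) : w.Disjoint (Equiv.swap a b) := fun j => by
  by_cases hj : Equiv.swap a b j = j
  · exact Or.inr hj
  · rcases (Equiv.swap_apply_ne_self_iff.mp hj).2 with rfl | rfl
    exacts [Or.inl ha, Or.inl hb]

end Permutations

section Energy

variable {J : Type*} (lam d : J → ℝ)

theorem support_energyA_summand_subset (w : Equiv.Perm J) :
    Function.support (fun j => lam j * (d (w j) - d j)) ⊆ {j | w j ≠ j} :=
  fun j hj hwj => hj (by simp [hwj])

theorem energyA_mul_of_disjoint {v w : Equiv.Perm J} (hv : IsFinPerm v) (hw : IsFinPerm w)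
    (hvw : v.Disjoint w) : energyA lam d (v * w) = energyA lam d v + energyA lam d w := by
  have hsplit : ∀ j, d ((v * w) j) - d j = (d (v j) - d j) + (d (w j) - d j) := by
    intro j
    rcases hvw j with hvj | hwj
    · rw [hvw.commute.eq, Equiv.Perm.mul_apply, hvj]; ring
    · rw [Equiv.Perm.mul_apply, hwj]; ring
  simp only [energyA, hsplit, mul_add]
  exact finsum_add_distrib (hv.subset (support_energyA_summand_subset lam d v))
    (hw.subset (support_energyA_summand_subset lam d w))

theorem energyA_swap [DecidableEq J] (a b : J) :
    energyA lam d (Equiv.swap a b) = (lam a - lam b) * (d b - d a) := by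
  rcases eq_or_ne a b with rfl | hab
  · simp [energyA]
  rw [energyA, finsum_eq_finsetSum_of_support_subset (s := {a, b}), Finset.sum_pair hab]
  · simp only [Equiv.swap_apply_left, Equiv.swap_apply_right]
    ring
  · intro j hj
    simpa using (Equiv.swap_apply_ne_self_iff.mp (support_energyA_summand_subset lam d _ hj)).2

theorem PECA.bddBelow {lam d : J → ℝ} (hpec : PECA lam d) :
    BddBelow (energyA lam d '' {w | IsFinPerm w}) := by
  obtain ⟨C, hC⟩ := hpec
  exact ⟨C, by rintro _ ⟨w, hw, rfl⟩; exact hC w hw⟩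

end Energy

section Descent

variable {J : Type*} {lam d : J → ℝ} {m n r s : ℝ}

/-- `w' = w * swap a b` for points `a`, `b` of the two sets outside the support of `w`. -/
theorem exists_isFinPerm_energyA_le_sub (hmn : m ≤ n)
    (hA : {j | lam j = m ∧ d j < r}.Infinite) (hB : {j | lam j = n ∧ s < d j}.Infinite)
    {w : Equiv.Perm J} (hw : IsFinPerm w) :
    ∃ w', IsFinPerm w' ∧ energyA lam d w' ≤ energyA lam d w - (n - m) * (s - r) := by
  classical
  obtain ⟨a, ⟨hlama, hda⟩, hwa⟩ := (hA.sdiff hw).nonempty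
  obtain ⟨b, ⟨hlamb, hdb⟩, hwb⟩ := (hB.sdiff hw).nonempty
  simp only [Set.mem_ofPred_eq, not_not] at hwa hwb
  refine ⟨w * Equiv.swap a b, hw.mul (isFinPerm_swap a b), ?_⟩
  rw [energyA_mul_of_disjoint lam d hw (isFinPerm_swap a b)
    (Equiv.Perm.disjoint_swap_of_apply_eq hwa hwb), energyA_swap, hlama, hlamb]
  have : (n - m) * (s - r) ≤ (n - m) * (d b - d a) :=
    mul_le_mul_of_nonneg_left (by linarith) (sub_nonneg.mpr hmn)
  linarith

theorem not_pecA_of_infinite (hmn : m < n) (hrs : r < s)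
    (hA : {j | lam j = m ∧ d j < r}.Infinite) (hB : {j | lam j = n ∧ s < d j}.Infinite) :
    ¬ PECA lam d := by
  intro hpec
  refine not_bddBelow_of_forall_exists_le_sub (Set.Nonempty.image _ ⟨1, IsFinPerm.one⟩)
    (mul_pos (sub_pos.mpr hmn) (sub_pos.mpr hrs)) ?_ hpec.bddBelow
  rintro _ ⟨w, hw, rfl⟩
  obtain ⟨w', hw', hle⟩ := exists_isFinPerm_energyA_le_sub hmn.le hA hB hw
  exact ⟨_, ⟨w', hw', rfl⟩, hle⟩

end Descent

theorem pecA_at_most_one_r_general (J : Type*) (lam d : J → ℝ)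
    (hpec : PECA lam d) (m n : ℝ) (hmn : m < n) :
    ∀ r₁ r₂ : ℝ,
      {j | lam j = m ∧ d j < r₁}.Infinite → {j | lam j = n ∧ r₁ < d j}.Infinite →
      {j | lam j = m ∧ d j < r₂}.Infinite → {j | lam j = n ∧ r₂ < d j}.Infinite →
      r₁ = r₂ := by
  intro r₁ r₂ hA₁ hB₁ hA₂ hB₂
  by_contra hne
  rcases lt_or_gt_of_ne hne with h | h
  · exact not_pecA_of_infinite hmn h hA₁ hB₂ hpec
  · exact not_pecA_of_infinite hmn h hA₂ hB₁ hpec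

theorem pecA_at_most_one_r (J : Type*) [Infinite J] (lam d : J → ℝ)
    (hpec : PECA lam d) (m n : ℝ) (hmn : m < n) :
    ∀ r₁ r₂ : ℝ,
      {j | lam j = m ∧ d j < r₁}.Infinite → {j | lam j = n ∧ r₁ < d j}.Infinite →
      {j | lam j = m ∧ d j < r₂}.Infinite → {j | lam j = n ∧ r₂ < d j}.Infinite →
      r₁ = r₂ :=
  pecA_at_most_one_r_general J lam d hpec m n hmn
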